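/- arXiv:2402.08945 — 2 statements merged into one kernel-verified Lean document; each statement's English description precedes it below -/
import Mathlib

section
/- Let π : T → B be a local homeomorphism. A subset V ⊆ T is open if and only if for every open subset U of B and every section σ of T over U, the preimage σ⁻¹(V) is open in U. That is, the topology of T coincides with the final topology induced by the sections of T over open subsets of B. -/
/-- For a local homeomorphism `π : T → B`, a subset `V ⊆ T` is open iff for every open
`U ⊆ B` and every section `σ` of `T` over `U`, the preimage `σ ⁻¹' V` is open in `U`;
i.e. the topology of `T` is the final topology induced by the sections of `T`. -/
theorem stmt9 {T B : Type*} [TopologicalSpace T] [TopologicalSpace B] (π : T → B)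
    (hπ : IsLocalHomeomorph π) (V : Set T) :
    IsOpen V ↔
      ∀ U : Set B, IsOpen U → ∀ σ : U → T,
        Continuous σ → (∀ b : U, π (σ b) = b) → IsOpen (σ ⁻¹' V) := by
  constructor
  · intro hV U _ σ hσ _
    exact hV.preimage hσ
  · intro h
    rw [isOpen_iff_forall_mem_open]
    intro t ht
    obtain ⟨e, hte, hπe⟩ := hπ t
    -- the section over e.target given by e.symm
    have hsec : IsOpen ((fun b : e.target => e.symm b) ⁻¹' V) := by
      refine h e.target e.open_target _ (e.continuousOn_symm.comp_continuous
        continuous_subtype_val fun b => b.2) fun b => ?_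
      rw [hπe]
      exact e.right_inv b.2
    -- turn it into an open set in B
    obtain ⟨S, hS, hSeq⟩ := hsec
    have hSopen : IsOpen (S ∩ e.target) := hS.inter e.open_target
    refine ⟨e.source ∩ e ⁻¹' (S ∩ e.target), ?_, ?_, ?_⟩
    · intro x ⟨hx, hxS, _⟩
      have : e.symm (e x) ∈ V := by
        have : (⟨e x, e.map_source hx⟩ : e.target) ∈ (fun b : e.target => e.symm b) ⁻¹' V := by
          rw [← hSeq]; exact hxS
        exact this
      rwa [e.left_inv hx] at this
    · exact e.continuousOn.isOpen_inter_preimage e.open_source hSopen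
    · refine ⟨hte, ?_, e.map_source hte⟩
      have : (⟨e t, e.map_source hte⟩ : e.target) ∈ (fun b : e.target => e.symm b) ⁻¹' V := by
        simp only [Set.mem_preimage, e.left_inv hte]; exact ht
      rw [← hSeq] at this
      exact this
end

section
/- Let B be a topological space. Then the full subcategory Etale(B) of Bundle(B), whose objects are the bundles (T, π) with π : T → B a local homeomorphism, is coreflective in Bundle(B): the inclusion functor Etale(B) → Bundle(B) has a right adjoint. -/
open CategoryTheory

open CategoryTheory Topology TopologicalSpace

namespace Stmt17
universe u
variable {B : Type u} [TopologicalSpace B]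

/-- A local section of `p : T → B`: a total function that is a continuous section on an
open set `U`. -/
structure LS {T : Type u} [TopologicalSpace T] (p : T → B) where
  U : Set B
  hU : IsOpen U
  toFun : B → T
  cont : ContinuousOn toFun U
  sec : ∀ x ∈ U, p (toFun x) = x

variable {T : Type u} [TopologicalSpace T] {p : T → B}

/-- Two local sections are related at `b` if they agree on an open neighborhood of `b`. -/
def LSRel (p : T → B) (b : B) (σ τ : LS p) : Prop :=
  ∃ V : Set B, IsOpen V ∧ b ∈ V ∧ V ⊆ σ.U ∧ V ⊆ τ.U ∧ Set.EqOn σ.toFun τ.toFun V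

theorem lsRel_refl (b : B) (σ : LS p) (hb : b ∈ σ.U) : LSRel p b σ σ :=
  ⟨σ.U, σ.hU, hb, le_rfl, le_rfl, fun _ _ => rfl⟩

theorem lsRel_symm {b : B} {σ τ : LS p} (h : LSRel p b σ τ) : LSRel p b τ σ := by
  obtain ⟨V, hV, hbV, h1, h2, he⟩ := h
  exact ⟨V, hV, hbV, h2, h1, fun x hx => (he hx).symm⟩

theorem lsRel_trans {b : B} {σ τ ρ : LS p} (h : LSRel p b σ τ) (h' : LSRel p b τ ρ) :
    LSRel p b σ ρ := by
  obtain ⟨V, hV, hbV, h1, h2, he⟩ := h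
  obtain ⟨W, hW, hbW, h1', h2', he'⟩ := h'
  exact ⟨V ∩ W, hV.inter hW, ⟨hbV, hbW⟩, fun x hx => h1 hx.1, fun x hx => h2' hx.2,
    fun x hx => (he hx.1).trans (he' hx.2)⟩

/-- The setoid of local sections through `b`. -/
def germSetoid (p : T → B) (b : B) : Setoid {σ : LS p // b ∈ σ.U} where
  r σ τ := LSRel p b σ.1 τ.1
  iseqv := ⟨fun σ => lsRel_refl b σ.1 σ.2, lsRel_symm, lsRel_trans⟩

/-- Germs at `b` of local sections of `p`. -/
def Germ (p : T → B) (b : B) : Type _ := Quotient (germSetoid p b)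

/-- The étale (germ) space of `p`. -/
abbrev GermSpace (p : T → B) : Type _ := Σ b : B, Germ p b

def germAt (σ : LS p) (b : B) (hb : b ∈ σ.U) : Germ p b := Quotient.mk _ ⟨σ, hb⟩

theorem germAt_eq_iff {σ τ : LS p} {b : B} {h1 : b ∈ σ.U} {h2 : b ∈ τ.U} :
    germAt σ b h1 = germAt τ b h2 ↔ LSRel p b σ τ := by
  constructor
  · intro h; exact Quotient.exact h
  · intro h; exact Quotient.sound h

/-- The basic open set associated with a local section. -/
def bas (σ : LS p) : Set (GermSpace p) :=
  {q | ∃ hb : q.1 ∈ σ.U, q.2 = germAt σ q.1 hb}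

/-- Restriction of a local section to an open set. -/
def LS.restrict (σ : LS p) (V : Set B) (hV : IsOpen V) : LS p where
  U := σ.U ∩ V
  hU := σ.hU.inter hV
  toFun := σ.toFun
  cont := σ.cont.mono Set.inter_subset_left
  sec := fun x hx => σ.sec x hx.1

theorem germAt_restrict (σ : LS p) (V : Set B) (hV : IsOpen V) (b : B)
    (hb : b ∈ σ.U ∩ V) : germAt (σ.restrict V hV) b hb = germAt σ b hb.1 :=
  Quotient.sound ⟨σ.U ∩ V, σ.hU.inter hV, hb, le_rfl, Set.inter_subset_left,
    fun _ _ => rfl⟩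

/-- The set where two local sections have the same germ is open. -/
theorem isOpen_germEq (σ τ : LS p) :
    IsOpen {x : B | ∃ (h1 : x ∈ σ.U) (h2 : x ∈ τ.U), germAt σ x h1 = germAt τ x h2} := by
  rw [isOpen_iff_forall_mem_open]
  rintro x ⟨h1, h2, he⟩
  obtain ⟨V, hV, hbV, hs1, hs2, heq⟩ := germAt_eq_iff.mp he
  refine ⟨V, fun y hy => ⟨hs1 hy, hs2 hy, germAt_eq_iff.mpr ⟨V, hV, hy, hs1, hs2, heq⟩⟩, hV, hbV⟩

instance : TopologicalSpace (GermSpace p) :=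
  generateFrom {s | ∃ σ : LS p, s = bas σ}

theorem isBasis : IsTopologicalBasis {s : Set (GermSpace p) | ∃ σ : LS p, s = bas σ} := by
  refine ⟨?_, ?_, rfl⟩
  · rintro t1 ⟨σ, rfl⟩ t2 ⟨τ, rfl⟩ q ⟨⟨h1, he1⟩, ⟨h2, he2⟩⟩
    have hgeq : germAt σ q.1 h1 = germAt τ q.1 h2 := he1 ▸ he2
    obtain ⟨V, hV, hbV, hs1, hs2, heq⟩ := germAt_eq_iff.mp hgeq
    refine ⟨bas (σ.restrict V hV), ⟨_, rfl⟩, ⟨⟨h1, hbV⟩, by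
        exact he1.trans (germAt_restrict σ V hV q.1 ⟨h1, hbV⟩).symm⟩, ?_⟩
    rintro r ⟨hr, her⟩
    replace her := her.trans (germAt_restrict σ V hV r.1 hr)
    refine ⟨⟨hr.1, her⟩, ⟨hs2 hr.2, her.trans (germAt_eq_iff.mpr ⟨V, hV, hr.2, hs1, hs2, heq⟩)⟩⟩
  · ext q
    simp only [Set.mem_sUnion, Set.mem_univ, iff_true]
    obtain ⟨⟨σ, hb⟩, hrep⟩ := Quotient.exists_rep q.2
    exact ⟨bas σ, ⟨σ, rfl⟩, hb, hrep.symm⟩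

theorem isOpen_bas (σ : LS p) : IsOpen (bas σ) := isBasis.isOpen ⟨σ, rfl⟩

theorem continuous_fst : Continuous fun q : GermSpace p => q.1 := by
  rw [continuous_def]
  intro W hW
  rw [isBasis.isOpen_iff]
  rintro ⟨b, g⟩ hb
  obtain ⟨⟨σ, hbσ⟩, hrep⟩ := Quotient.exists_rep g
  refine ⟨bas (σ.restrict W hW), ⟨_, rfl⟩, ⟨⟨hbσ, hb⟩, by exact hrep.symm.trans (germAt_restrict σ W hW b ⟨hbσ, hb⟩).symm⟩,
    fun r hr => hr.1.2⟩

end Stmt17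
namespace Stmt17
universe u
open scoped Classical
variable {B : Type u} [TopologicalSpace B]
variable {T : Type u} [TopologicalSpace T] {p : T → B}

/-- The tautological section map into the germ space, as a continuous map on `σ.U`. -/
theorem continuousOn_taut (σ : LS p) (q0 : GermSpace p) :
    ContinuousOn (fun b => if h : b ∈ σ.U then (⟨b, germAt σ b h⟩ : GermSpace p) else q0) σ.U := by
  rw [continuousOn_iff_continuous_restrict]
  rw [isBasis.continuous_iff]
  rintro s ⟨τ, rfl⟩
  have : Set.domRestrict σ.U (fun b => if h : b ∈ σ.U then (⟨b, germAt σ b h⟩ : GermSpace p) else q0)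
      ⁻¹' bas τ = Subtype.val ⁻¹'
      {x : B | ∃ (h1 : x ∈ σ.U) (h2 : x ∈ τ.U), germAt σ x h1 = germAt τ x h2} := by
    ext ⟨x, hx⟩
    simp only [Set.domRestrict_apply, Set.mem_preimage, dif_pos hx, Set.mem_setOf_eq]
    constructor
    · rintro ⟨h2, he⟩; exact ⟨hx, h2, he⟩
    · rintro ⟨h1, h2, he⟩; exact ⟨h2, he⟩
  rw [this]
  exact (isOpen_germEq σ τ).preimage continuous_subtype_val

theorem isLocalHomeomorph_fst : IsLocalHomeomorph fun q : GermSpace p => q.1 := by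
  apply IsLocalHomeomorph.mk
  intro q0
  obtain ⟨⟨σ, hbσ⟩, hrep⟩ := Quotient.exists_rep q0.2
  refine ⟨{ toFun := fun q => q.1
            invFun := fun b => if h : b ∈ σ.U then ⟨b, germAt σ b h⟩ else q0
            source := bas σ
            target := σ.U
            map_source' := fun q hq => hq.1
            map_target' := fun b hb => by simp only [dif_pos hb]; exact ⟨hb, rfl⟩
            left_inv' := ?_
            right_inv' := fun b hb => by simp only [dif_pos hb]
            open_source := isOpen_bas σ
            open_target := σ.hU
            continuousOn_toFun := continuous_fst.continuousOn
            continuousOn_invFun := continuousOn_taut σ q0 }, ⟨hbσ, hrep.symm⟩, fun q hq => rfl⟩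
  rintro ⟨b, g⟩ ⟨hb, he⟩
  have he2 : g = germAt σ b hb := he
  simp only [dif_pos (show b ∈ σ.U from hb)]
  exact Sigma.ext rfl (heq_of_eq he2.symm)

/-- The counit evaluation map `GermSpace p → T`. -/
def counitFun (q : GermSpace p) : T :=
  Quotient.lift (fun σh : {σ : LS p // q.1 ∈ σ.U} => σh.1.toFun q.1)
    (by rintro ⟨σ, h1⟩ ⟨τ, h2⟩ ⟨V, hV, hbV, hs1, hs2, heq⟩; exact heq hbV) q.2

theorem counitFun_germAt (σ : LS p) (b : B) (hb : b ∈ σ.U) :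
    counitFun (⟨b, germAt σ b hb⟩ : GermSpace p) = σ.toFun b := rfl

theorem continuous_counitFun : Continuous (counitFun : GermSpace p → T) := by
  rw [continuous_def]
  intro W hW
  rw [isBasis.isOpen_iff]
  rintro ⟨b, g⟩ hbg
  obtain ⟨⟨σ, hbσ⟩, hrep⟩ := Quotient.exists_rep g
  have hval : σ.toFun b ∈ W := by
    rw [Set.mem_preimage] at hbg
    rwa [show counitFun (⟨b, g⟩ : GermSpace p) = σ.toFun b from by
      rw [← hrep]; rfl] at hbg
  have hO : IsOpen (σ.U ∩ σ.toFun ⁻¹' W) := σ.cont.isOpen_inter_preimage σ.hU hW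
  refine ⟨bas (σ.restrict _ hO), ⟨_, rfl⟩,
    ⟨⟨hbσ, hbσ, hval⟩, by exact hrep.symm.trans (germAt_restrict σ _ hO b ⟨hbσ, hbσ, hval⟩).symm⟩, ?_⟩
  rintro ⟨b', g'⟩ ⟨hb', he'⟩
  have he2 : g' = germAt (σ.restrict _ hO) b' hb' := he'
  have : counitFun (⟨b', g'⟩ : GermSpace p) = σ.toFun b' := by
    rw [he2]; rfl
  rw [Set.mem_preimage, this]
  exact hb'.2.2

end Stmt17
namespace Stmt17
universe u
variable {B : Type u} [TopologicalSpace B]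
variable {T : Type u} [TopologicalSpace T] {p : T → B}
variable {S : Type u} [TopologicalSpace S] {q : S → B}

/-- Two local sections of a local homeomorphism agreeing at a point have the same germ. -/
theorem lsRel_of_isLocalHomeomorph (hq : IsLocalHomeomorph q) (σ τ : LS q) (b : B)
    (h1 : b ∈ σ.U) (h2 : b ∈ τ.U) (hval : σ.toFun b = τ.toFun b) : LSRel q b σ τ := by
  obtain ⟨e, hse, rfl⟩ := hq (σ.toFun b)
  refine ⟨(σ.U ∩ σ.toFun ⁻¹' e.source) ∩ (τ.U ∩ τ.toFun ⁻¹' e.source),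
    (σ.cont.isOpen_inter_preimage σ.hU e.open_source).inter
      (τ.cont.isOpen_inter_preimage τ.hU e.open_source),
    ⟨⟨h1, hse⟩, ⟨h2, by rw [Set.mem_preimage, ← hval]; exact hse⟩⟩,
    fun x hx => hx.1.1, fun x hx => hx.2.1, ?_⟩
  rintro x ⟨⟨hx1, hxe1⟩, ⟨hx2, hxe2⟩⟩
  exact e.injOn hxe1 hxe2 ((σ.sec x hx1).trans (τ.sec x hx2).symm)

/-- Push a local section forward along a map over `B`. -/
def LS.comp (σ : LS q) (g : S → T) (hg : Continuous g) (hpg : ∀ x, p (g x) = q x) : LS p where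
  U := σ.U
  hU := σ.hU
  toFun := g ∘ σ.toFun
  cont := hg.comp_continuousOn σ.cont
  sec := fun x hx => by simp only [Function.comp_apply, hpg]; exact σ.sec x hx

theorem lsRel_comp {σ τ : LS q} {b : B} (h : LSRel q b σ τ) (g : S → T) (hg : Continuous g)
    (hpg : ∀ x, p (g x) = q x) : LSRel p b (σ.comp g hg hpg) (τ.comp g hg hpg) := by
  obtain ⟨V, hV, hbV, hs1, hs2, heq⟩ := h
  exact ⟨V, hV, hbV, hs1, hs2, fun x hx => by
    simp only [LS.comp, Function.comp_apply, heq hx]⟩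

/-- The local section of `q` coming from a partial homeomorphism agreeing with `q`. -/
def LS.ofPH (e : OpenPartialHomeomorph S B) (heq : q = ⇑e) : LS q where
  U := e.target
  hU := e.open_target
  toFun := e.symm
  cont := e.symm.continuousOn
  sec := fun x hx => (congrFun heq _).trans (e.right_inv hx)

theorem LS.ofPH_mem (e : OpenPartialHomeomorph S B) (heq : q = ⇑e) {s : S} (hs : s ∈ e.source) :
    q s ∈ (LS.ofPH e heq).U := by
  show q s ∈ e.target
  rw [congrFun heq s]
  exact e.map_source hs

theorem LS.ofPH_val (e : OpenPartialHomeomorph S B) (heq : q = ⇑e) {s : S} (hs : s ∈ e.source) :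
    (LS.ofPH e heq).toFun (q s) = s := by
  show e.symm (q s) = s
  rw [congrFun heq s]
  exact e.left_inv hs

/-- A canonical local section of a local homeomorphism through a given point. -/
noncomputable def secOf (hq : IsLocalHomeomorph q) (s : S) : LS q :=
  LS.ofPH (hq s).choose (hq s).choose_spec.2

theorem secOf_mem (hq : IsLocalHomeomorph q) (s : S) : q s ∈ (secOf hq s).U :=
  LS.ofPH_mem _ _ (hq s).choose_spec.1

theorem secOf_val (hq : IsLocalHomeomorph q) (s : S) : (secOf hq s).toFun (q s) = s :=
  LS.ofPH_val _ _ (hq s).choose_spec.1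

variable (p) in
/-- The lift of a bundle map `g : S → T` over `B` to the germ space of `p`,
where `q : S → B` is a local homeomorphism. -/
noncomputable def liftFun (hq : IsLocalHomeomorph q) (g : S → T) (hg : Continuous g)
    (hpg : ∀ x, p (g x) = q x) (s : S) : GermSpace p :=
  ⟨q s, germAt ((secOf hq s).comp g hg hpg) (q s) (secOf_mem hq s)⟩

/-- The lift may be computed with any local section through `s`. -/
theorem liftFun_spec (hq : IsLocalHomeomorph q) (g : S → T) (hg : Continuous g)
    (hpg : ∀ x, p (g x) = q x) (s : S) (σ : LS q) (hb : q s ∈ σ.U) (hval : σ.toFun (q s) = s) :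
    liftFun p hq g hg hpg s = ⟨q s, germAt (σ.comp g hg hpg) (q s) hb⟩ := by
  refine Sigma.ext rfl (heq_of_eq ?_)
  show germAt ((secOf hq s).comp g hg hpg) (q s) _ = germAt (σ.comp g hg hpg) (q s) hb
  apply germAt_eq_iff.mpr
  exact lsRel_comp (lsRel_of_isLocalHomeomorph hq _ σ (q s) (secOf_mem hq s) hb
    ((secOf_val hq s).trans hval.symm)) g hg hpg

theorem continuous_liftFun (hq : IsLocalHomeomorph q) (g : S → T) (hg : Continuous g)
    (hpg : ∀ x, p (g x) = q x) : Continuous (liftFun p hq g hg hpg) := by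
  rw [isBasis.continuous_iff]
  rintro _ ⟨τ, rfl⟩
  rw [isOpen_iff_forall_mem_open]
  intro s hs
  obtain ⟨e, hse, heq⟩ := hq s
  have hmem : ∀ s' ∈ e.source, q s' ∈ (LS.ofPH e heq).U := fun s' h => LS.ofPH_mem e heq h
  have hval : ∀ s' ∈ e.source, (LS.ofPH e heq).toFun (q s') = s' :=
    fun s' h => LS.ofPH_val e heq h
  refine ⟨e.source ∩ q ⁻¹' {x : B | ∃ (h1 : x ∈ ((LS.ofPH e heq).comp g hg hpg).U)
      (h2 : x ∈ τ.U), germAt ((LS.ofPH e heq).comp g hg hpg) x h1 = germAt τ x h2}, ?_, ?_, ?_⟩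
  · rintro s' ⟨hs'e, hs'⟩
    obtain ⟨h1, h2, hgerm⟩ := hs'
    rw [Set.mem_preimage,
      liftFun_spec hq g hg hpg s' (LS.ofPH e heq) (hmem s' hs'e) (hval s' hs'e)]
    exact ⟨h2, hgerm.symm ▸ rfl⟩
  · exact e.open_source.inter ((isOpen_germEq _ _).preimage hq.continuous)
  · refine ⟨hse, ?_⟩
    rw [Set.mem_preimage] at hs ⊢
    rw [liftFun_spec hq g hg hpg s (LS.ofPH e heq) (hmem s hse) (hval s hse)] at hs
    obtain ⟨h2, hgerm⟩ := hs
    exact ⟨hmem s hse, h2, hgerm⟩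

theorem counitFun_liftFun (hq : IsLocalHomeomorph q) (g : S → T) (hg : Continuous g)
    (hpg : ∀ x, p (g x) = q x) (s : S) : counitFun (liftFun p hq g hg hpg s) = g s := by
  show g ((secOf hq s).toFun (q s)) = g s
  rw [secOf_val]

end Stmt17
namespace Stmt17
universe u
open scoped Classical
variable {B : Type u} [TopologicalSpace B]
variable {T : Type u} [TopologicalSpace T] {p : T → B}
variable {S : Type u} [TopologicalSpace S] {q : S → B}

/-- The tautological local section of the germ space projection induced by `τ : LS p`. -/
noncomputable def tautLS (τ : LS p) (q0 : GermSpace p) :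
    LS (fun q : GermSpace p => q.1) where
  U := τ.U
  hU := τ.hU
  toFun := fun b => if h : b ∈ τ.U then ⟨b, germAt τ b h⟩ else q0
  cont := continuousOn_taut τ q0
  sec := fun x hx => by simp only [dif_pos hx]

theorem counitFun_fst (x : GermSpace p) : p (counitFun x) = x.1 := by
  obtain ⟨⟨σ, hbσ⟩, hrep⟩ := Quotient.exists_rep x.2
  have : counitFun x = σ.toFun x.1 := by
    rw [show x = ⟨x.1, x.2⟩ from rfl, ← hrep]; rfl
  rw [this, σ.sec _ hbσ]

/-- The key lemma for the right inverse: lifting the composite of a bundle map into the germ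
space with the counit gives back the map. -/
theorem liftFun_counit (hq : IsLocalHomeomorph q) (h : S → GermSpace p) (hh : Continuous h)
    (hfst : ∀ x, (h x).1 = q x) (s : S) :
    liftFun p hq (counitFun ∘ h) (continuous_counitFun.comp hh)
      (fun x => (counitFun_fst (h x)).trans (hfst x)) s = h s := by
  rcases hs : h s with ⟨b, g⟩
  have hb : b = q s := by have := hfst s; rw [hs] at this; exact this
  subst hb
  obtain ⟨⟨τ, hbτ⟩, hrep⟩ := Quotient.exists_rep g
  -- two local sections of the germ-space projection through `h s`
  set σ := secOf hq s with hσdef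
  have hσU : q s ∈ σ.U := secOf_mem hq s
  have hσv : σ.toFun (q s) = s := secOf_val hq s
  have hπ : IsLocalHomeomorph fun x : GermSpace p => x.1 := isLocalHomeomorph_fst
  have hcomp : ∀ x : S, (h x).1 = q x := hfst
  -- r1 = h ∘ σ,  r2 = tautological section of τ
  have hrel : LSRel (fun x : GermSpace p => x.1) (q s)
      (σ.comp h hh hcomp) (tautLS τ ⟨q s, g⟩) := by
    refine lsRel_of_isLocalHomeomorph hπ _ _ (q s) hσU hbτ ?_
    show h (σ.toFun (q s)) = _
    rw [hσv, hs]
    show (⟨q s, g⟩ : GermSpace p) = if h' : q s ∈ τ.U then ⟨q s, germAt τ (q s) h'⟩ else _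
    rw [dif_pos hbτ]
    exact Sigma.ext rfl (heq_of_eq hrep.symm)
  obtain ⟨V, hV, hbV, hs1, hs2, heqV⟩ := hrel
  refine (liftFun_spec hq _ _ _ s σ hσU hσv).trans ?_
  refine Sigma.ext rfl (heq_of_eq ?_)
  show germAt (σ.comp (counitFun ∘ h) _ _) (q s) hσU = g
  rw [← hrep]
  show germAt (σ.comp (counitFun ∘ h) _ _) (q s) hσU = germAt τ (q s) hbτ
  apply germAt_eq_iff.mpr
  refine ⟨V, hV, hbV, hs1, hs2, ?_⟩
  intro x hx
  have := heqV hx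
  show counitFun (h (σ.toFun x)) = τ.toFun x
  rw [show h (σ.toFun x) = (tautLS τ ⟨q s, g⟩).toFun x from this]
  show counitFun (if h' : x ∈ τ.U then (⟨x, germAt τ x h'⟩ : GermSpace p) else _) = τ.toFun x
  rw [dif_pos (show x ∈ τ.U from hs2 hx)]
  rfl

end Stmt17
namespace Stmt17
universe u
open CategoryTheory
variable {B : TopCat.{u}}

theorem bas_eq_of_fst_eq {T : Type u} [TopologicalSpace T] {p : T → B} (τ : LS p)
    {r1 r2 : GermSpace p} (h1 : r1 ∈ bas τ) (h2 : r2 ∈ bas τ) (hb : r1.1 = r2.1) : r1 = r2 := by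
  obtain ⟨b1, g1⟩ := r1
  obtain ⟨b2, g2⟩ := r2
  obtain ⟨m1, e1⟩ := h1
  obtain ⟨m2, e2⟩ := h2
  dsimp at hb
  subst hb
  exact Sigma.ext rfl (heq_of_eq (e1.trans e2.symm))

abbrev Etale (B : TopCat.{u}) := ObjectProperty.FullSubcategory fun f : Over B => IsLocalHomeomorph (⇑f.hom)

/-- The germ-space bundle of a bundle. -/
noncomputable def E (X : Over B) : Over B :=
  Over.mk (Y := TopCat.of (GermSpace (⇑X.hom : X.left → B)))
    (TopCat.ofHom ⟨fun q => q.1, continuous_fst⟩)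

theorem hE (X : Over B) : IsLocalHomeomorph (⇑(E X).hom) := isLocalHomeomorph_fst

theorem ehom_ext {S T : Etale B} {f g : S ⟶ T}
    (h : ∀ x, f.hom.left x = g.hom.left x) : f = g := by
  apply ObjectProperty.hom_ext
  apply CommaMorphism.ext
  · ext x
    exact h x
  · apply Subsingleton.elim

theorem overW {X Y : Over B} (g : X ⟶ Y) (x : X.left) : Y.hom (g.left x) = X.hom x := by
  rw [← Over.w g]; rfl

variable (B) in
abbrev P : Over B → Prop := fun f : Over B => IsLocalHomeomorph (⇑f.hom)

/-- The hom-set equivalence of the coreflection adjunction. -/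
noncomputable def equivHom (S : Etale B) (X : Over B) :
    ((ObjectProperty.ι (P B)).obj S ⟶ X) ≃
      (S ⟶ (⟨E X, hE X⟩ : Etale B)) where
  toFun g :=
    ObjectProperty.homMk (Over.homMk (TopCat.ofHom ⟨liftFun (⇑X.hom) S.2 (⇑g.left) g.left.hom.continuous (fun x => overW g x),
        continuous_liftFun _ _ _ _⟩ : S.obj.left ⟶ (E X).left)
      (by ext x; rfl))
  invFun h :=
    Over.homMk (h.hom.left ≫ (TopCat.ofHom ⟨counitFun, continuous_counitFun⟩ : (E X).left ⟶ X.left))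
      (by
        ext x
        show X.hom (counitFun (h.hom.left x)) = S.obj.hom x
        rw [counitFun_fst (h.hom.left x)]
        exact overW h.hom x)
  left_inv g := by
    ext1
    ext x
    exact counitFun_liftFun S.2 (⇑g.left) g.left.hom.continuous _ x
  right_inv h := by
    refine ehom_ext fun x => ?_
    show liftFun (⇑X.hom) S.2 _ _ _ x = h.hom.left x
    have hfst : ∀ y, ((⇑h.hom.left : S.obj.left → GermSpace (⇑X.hom)) y).1 = S.obj.hom y :=
      fun y => overW h.hom y
    exact liftFun_counit S.2 (⇑h.hom.left) h.hom.left.hom.continuous hfst x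

theorem equivHom_natural {S' S : Etale B} {X : Over B} (f : S' ⟶ S)
    (g : (ObjectProperty.ι (P B)).obj S ⟶ X) :
    equivHom S' X ((ObjectProperty.ι (P B)).map f ≫ g) = f ≫ equivHom S X g := by
  refine ehom_ext fun x => ?_
  show liftFun (⇑X.hom) S'.2 _ _ _ x =
    liftFun (⇑X.hom) S.2 (⇑g.left) g.left.hom.continuous (fun y => overW g y) (f.hom.left x)
  -- the canonical section of S' through x
  set σ' := secOf S'.2 x with hσ'
  have hσ'U : S'.obj.hom x ∈ σ'.U := secOf_mem S'.2 x
  have hσ'v : σ'.toFun (S'.obj.hom x) = x := secOf_val S'.2 x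
  have hqf : ∀ y, S.obj.hom (f.hom.left y) = S'.obj.hom y := fun y => overW f.hom y
  set σ : LS (⇑S.obj.hom) := σ'.comp (⇑f.hom.left) f.hom.left.hom.continuous hqf with hσ
  have hmem : S.obj.hom (f.hom.left x) ∈ σ.U := by
    show S.obj.hom (f.hom.left x) ∈ σ'.U
    rw [hqf x]; exact hσ'U
  have hval : σ.toFun (S.obj.hom (f.hom.left x)) = f.hom.left x := by
    show f.hom.left (σ'.toFun (S.obj.hom (f.hom.left x))) = f.hom.left x
    rw [hqf x, hσ'v]
  set τ0 : LS (⇑X.hom) := σ'.comp _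
    ((ObjectProperty.ι (P B)).map f ≫ g).left.hom.continuous
    (fun y => overW ((ObjectProperty.ι (P B)).map f ≫ g) y) with hτ0
  refine bas_eq_of_fst_eq τ0 ?_ ?_ ?_
  · exact ⟨hσ'U, rfl⟩
  · rw [liftFun_spec S.2 (⇑g.left) g.left.hom.continuous (fun y => overW g y) (f.hom.left x) σ hmem hval]
    refine ⟨by show S.obj.hom (f.hom.left x) ∈ σ'.U; rw [hqf x]; exact hσ'U, ?_⟩
    show germAt (σ.comp (⇑g.left) _ _) _ _ = germAt τ0 _ _
    apply germAt_eq_iff.mpr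
    exact ⟨σ'.U, σ'.hU, by rw [hqf x]; exact hσ'U, le_rfl, le_rfl, fun y hy => rfl⟩
  · exact (hqf x).symm

end Stmt17

open CategoryTheory

/-- For a topological space `B`, the full subcategory `Etale(B)` of the slice category
`Bundle(B) = Top/B` on the bundles whose projection is a local homeomorphism is
coreflective in `Bundle(B)`: the inclusion functor has a right adjoint. -/
theorem stmt17 (B : TopCat) :
    Nonempty (Coreflective
      (ObjectProperty.ι fun f : Over B => IsLocalHomeomorph (⇑f.hom))) := by
  refine ⟨{ R := ?_, adj := ?_ }⟩
  · exact Adjunction.rightAdjointOfEquiv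
      (fun S X => Stmt17.equivHom S X) (fun S' S X f g => Stmt17.equivHom_natural f g)
  · exact Adjunction.adjunctionOfEquivRight _ _
end
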